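/- Let T be a finite rooted tree embedded piecewise-linearly in R^3 with root r, and let d(v) denote the intrinsic (path-length) distance in T from r to v. Then the sum of the lengths (persistence values) of all intervals in TMD(T,d) equals the total edge length of T. -/

import Mathlib

/-- A finite rooted tree, with a real number (the value of a function `f`,
e.g. a distance from the root) attached to each node. -/
inductive RTree : Type where
  | node (val : ℝ) (children : List RTree)

namespace RTree

/-- The value of `f` at the root. -/
def rootVal : RTree → ℝ
  | node x _ => x

/-- The maximal value of `f` on the subtree (under a function increasing away
from the root, this is the maximal value of `f` on the leaves). -/
def maxLeaf : RTree → ℝ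
  | node x ts => ts.attach.foldr (fun c m => max (maxLeaf c.1) m) x
  decreasing_by
    have := List.sizeOf_lt_of_mem c.2
    simp only [RTree.node.sizeOf_spec] at *
    omega

/-- `f` is strictly increasing along edges directed away from the root. -/
inductive Increasing : RTree → Prop
  | node {x ts} : (∀ c ∈ ts, x < rootVal c) → (∀ c ∈ ts, Increasing c) →
      Increasing (node x ts)

/-- The bars of the TMD algorithm other than the final bar `[f(r), L]`:
at each branch point, every detached child branch contributes a bar
`(f(branch point), max of f on the leaves of the branch]`; equivalently, each
child contributes such a candidate bar and one copy of a maximal one (the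
branch that stays attached) is removed. -/
noncomputable def tmdAux : RTree → Multiset (ℝ × ℝ)
  | node x ts =>
    (↑(ts.map fun c => (x, maxLeaf c)) - {(x, maxLeaf (node x ts))})
      + (ts.attach.map fun c => tmdAux c.1).sum
  decreasing_by
    have := List.sizeOf_lt_of_mem c.2
    simp only [RTree.node.sizeOf_spec] at *
    omega

/-- The topological morphology descriptor barcode, as a multiset of pairs
(left endpoint, right endpoint). -/
noncomputable def tmd (T : RTree) : Multiset (ℝ × ℝ) :=
  (T.rootVal, T.maxLeaf) ::ₘ T.tmdAux

/-- The multiset of values of `f` at the leaves. -/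
def leafVals : RTree → Multiset ℝ
  | node x ts =>
    if ts.isEmpty then {x}
    else (ts.attach.map fun c => leafVals c.1).sum
  decreasing_by
    have := List.sizeOf_lt_of_mem c.2
    simp only [RTree.node.sizeOf_spec] at *
    omega

end RTree

/-- A finite rooted tree embedded (piecewise linearly) in `ℝ³`: each node
carries its position, and each edge is the segment between the positions of its
endpoints. -/
inductive RTree3 : Type where
  | node (pos : EuclideanSpace ℝ (Fin 3)) (children : List RTree3)

namespace RTree3

/-- The position of the root. -/
def pos : RTree3 → EuclideanSpace ℝ (Fin 3)
  | node q _ => q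

/-- Adjacent nodes have distinct positions (so the embedding is
nondegenerate and the intrinsic distance strictly increases along edges). -/
inductive Embedded : RTree3 → Prop
  | node {q ts} : (∀ c ∈ ts, pos c ≠ q) → (∀ c ∈ ts, Embedded c) →
      Embedded (node q ts)

/-- The total edge length of the embedded tree: the sum of the Euclidean
lengths of its edges. -/
noncomputable def totalLen : RTree3 → ℝ
  | node q ts => (ts.attach.map fun c => dist q (pos c.1) + totalLen c.1).sum
  decreasing_by
    have := List.sizeOf_lt_of_mem c.2
    simp only [RTree3.node.sizeOf_spec] at *
    omega

/-- Replace the position of each node by its intrinsic (path-length) distance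
from the root; `a` is the intrinsic distance already accumulated at the current
root. -/
noncomputable def toDist (a : ℝ) : RTree3 → RTree
  | node q ts => RTree.node a (ts.attach.map fun c => toDist (a + dist q (pos c.1)) c.1)
  decreasing_by
    have := List.sizeOf_lt_of_mem c.2
    simp only [RTree3.node.sizeOf_spec] at *
    omega

end RTree3


open RTree RTree3

private lemma le_foldr_max (x : ℝ) : ∀ (l : List ℝ), x ≤ l.foldr max x
  | [] => le_refl x
  | _ :: l => le_trans (le_foldr_max x l) (le_max_right _ _)

private lemma mem_le_foldr_max (x : ℝ) : ∀ (l : List ℝ), ∀ y ∈ l, y ≤ l.foldr max x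
  | _ :: l, y, hy => by
    rcases List.mem_cons.mp hy with h | h
    · simp [h]
    · exact le_trans (mem_le_foldr_max x l y h) (le_max_right _ _)

private lemma foldr_max_cases (x : ℝ) : ∀ (l : List ℝ), l.foldr max x = x ∨ l.foldr max x ∈ l
  | [] => Or.inl rfl
  | y :: l => by
    simp only [List.foldr_cons]
    rcases le_total y (l.foldr max x) with h | h
    · rw [max_eq_right h]
      rcases foldr_max_cases x l with h' | h'
      · exact Or.inl h'
      · exact Or.inr (List.mem_cons_of_mem _ h')
    · rw [max_eq_left h]
      exact Or.inr List.mem_cons_self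

private lemma maxLeaf_node (x : ℝ) (ts : List RTree) :
    (RTree.node x ts).maxLeaf = (ts.map RTree.maxLeaf).foldr max x := by
  rw [RTree.maxLeaf, ← List.attach_map_val (l := ts) (f := RTree.maxLeaf), List.foldr_map]

private lemma sum_map_listsum (L : List (Multiset (ℝ × ℝ))) (f : ℝ × ℝ → ℝ) :
    (L.sum.map f).sum = (L.map fun s => (s.map f).sum).sum := by
  induction L with
  | nil => simp
  | cons s L ih => simp [ih]

private lemma rootVal_toDist (a : ℝ) (T : RTree3) : (toDist a T).rootVal = a := by
  cases T with | node q ts => rw [toDist]; rfl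

private lemma rootVal_le_maxLeaf (T : RTree) : T.rootVal ≤ T.maxLeaf := by
  cases T with | node x ts =>
    rw [maxLeaf_node]
    exact le_foldr_max x _

theorem tmdAux_sum : ∀ (T : RTree3), Embedded T → ∀ a : ℝ,
    (((toDist a T).tmdAux).map fun p => p.2 - p.1).sum
      = totalLen T - ((toDist a T).maxLeaf - a)
  | RTree3.node q ts, hT, a => by
    obtain ⟨hne, hemb⟩ : (∀ c ∈ ts, pos c ≠ q) ∧ (∀ c ∈ ts, Embedded c) := by
      cases hT with | node h1 h2 => exact ⟨h1, h2⟩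
    have htd : toDist a (RTree3.node q ts)
        = RTree.node a (ts.attach.map fun c => toDist (a + dist q (pos c.1)) c.1) := by
      rw [toDist]
    set ts' : List RTree := ts.attach.map fun c => toDist (a + dist q (pos c.1)) c.1 with hts'
    set M : ℝ := (RTree.node a ts').maxLeaf with hM
    have hgt : ∀ c ∈ ts.attach, a < (toDist (a + dist q (pos c.1)) c.1).maxLeaf := by
      intro c _
      have h1 : a + dist q (pos c.1) ≤ (toDist (a + dist q (pos c.1)) c.1).maxLeaf := by
        have := rootVal_le_maxLeaf (toDist (a + dist q (pos c.1)) c.1)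
        rwa [rootVal_toDist] at this
      have h2 : (0 : ℝ) < dist q (pos c.1) := by
        have : pos c.1 ≠ q := hne c.1 c.2
        have := dist_pos.mpr (Ne.symm this)
        linarith
      linarith
    by_cases hts : ts = []
    · subst hts
      rw [htd, RTree.tmdAux, totalLen, hts']
      simp [maxLeaf_node, List.attach_map_val]
    · have hMattain : ∃ c ∈ ts', RTree.maxLeaf c = M := by
        have hMfold : M = (ts'.map RTree.maxLeaf).foldr max a := by
          rw [hM, maxLeaf_node]
        rcases foldr_max_cases a (ts'.map RTree.maxLeaf) with h | h
        · exfalso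
          obtain ⟨c0, hc0⟩ := List.exists_mem_of_ne_nil ts hts
          have hc0' : (toDist (a + dist q (pos c0)) c0) ∈ ts' := by
            rw [hts']
            exact List.mem_map.mpr ⟨⟨c0, hc0⟩, List.mem_attach _ _, rfl⟩
          have hle : RTree.maxLeaf (toDist (a + dist q (pos c0)) c0)
              ≤ (ts'.map RTree.maxLeaf).foldr max a :=
            mem_le_foldr_max a _ _ (List.mem_map.mpr ⟨_, hc0', rfl⟩)
          have hgt' : a < (toDist (a + dist q (pos c0)) c0).maxLeaf :=
            hgt ⟨c0, hc0⟩ (List.mem_attach _ _)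
          rw [h] at hle
          linarith
        · obtain ⟨c, hc, hceq⟩ := List.mem_map.mp h
          exact ⟨c, hc, hceq.trans hMfold.symm⟩
      obtain ⟨cM, hcM, hcMeq⟩ := hMattain
      have hmem : ((a, M) : ℝ × ℝ)
          ∈ (↑(ts'.map fun c => (a, RTree.maxLeaf c)) : Multiset (ℝ × ℝ)) := by
        rw [Multiset.mem_coe]
        exact List.mem_map.mpr ⟨cM, hcM, by rw [hcMeq]⟩
      rw [htd, RTree.tmdAux]
      have hMdef : (RTree.node a ts').maxLeaf = M := rfl
      rw [hMdef, Multiset.sub_singleton, Multiset.map_add, Multiset.sum_add]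
      have h1 : (((↑(ts'.map fun c => (a, RTree.maxLeaf c)) : Multiset (ℝ × ℝ)).erase
            (a, M)).map fun p => p.2 - p.1).sum
          = ((ts'.map fun c => RTree.maxLeaf c - a).sum) - (M - a) := by
        have hrec := Multiset.cons_erase hmem
        have hstep : (((↑(ts'.map fun c => (a, RTree.maxLeaf c)) : Multiset (ℝ × ℝ)).map
            fun p => p.2 - p.1).sum)
            = (M - a) + ((((↑(ts'.map fun c => (a, RTree.maxLeaf c)) : Multiset (ℝ × ℝ)).erase
              (a, M)).map fun p => p.2 - p.1).sum) := by
          conv_lhs => rw [← hrec]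
          simp
        have hml : (((↑(ts'.map fun c => (a, RTree.maxLeaf c)) : Multiset (ℝ × ℝ)).map
            fun p => p.2 - p.1).sum) = (ts'.map fun c => RTree.maxLeaf c - a).sum := by
          simp [Multiset.map_coe, Multiset.sum_coe, List.map_map, Function.comp_def]
        linarith [hstep, hml]
      rw [h1]
      have h2 : (ts'.attach.map fun c => RTree.tmdAux c.1) = ts'.map RTree.tmdAux :=
        List.attach_map_val
      rw [h2, sum_map_listsum]
      have hA : (ts'.map fun c => RTree.maxLeaf c - a).sum
          + ((ts'.map RTree.tmdAux).map fun s =>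
              (s.map fun p => p.2 - p.1).sum).sum
          = totalLen (RTree3.node q ts) := by
        rw [hts']
        simp only [List.map_map, Function.comp_def]
        rw [← List.sum_map_add, totalLen]
        apply congrArg
        apply List.map_congr_left
        intro c hc
        rw [tmdAux_sum c.1 (hemb c.1 c.2) (a + dist q (pos c.1))]
        ring
      linarith [hA]
  decreasing_by
    have := List.sizeOf_lt_of_mem c.2
    simp only [RTree3.node.sizeOf_spec] at *
    omega


open RTree RTree3 in
/-- for a finite rooted tree `T` embedded piecewise linearly in
`ℝ³`, with `d` the intrinsic (path-length) distance from the root, the sum of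
the lengths (persistences) of the intervals of `TMD(T,d)` equals the total edge
length of `T`. -/
theorem tmd_total_persistence_eq_total_length (T : RTree3) (hT : Embedded T) :
    ((tmd (toDist 0 T)).map fun p => p.2 - p.1).sum = totalLen T := by
  rw [tmd, Multiset.map_cons, Multiset.sum_cons, tmdAux_sum T hT 0, rootVal_toDist]
  ring
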